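/- arXiv:2002.01129 — 2 statements merged into one kernel-verified Lean document; each statement's English description precedes it below -/
import Mathlib

section
/- If in addition the μ̃_i are pairwise uncorrelated, then the estimator τ̂² = (1/(N−1))∑_i (μ̃_i − ν̂)² − (1/N)∑_i σ̃_i² is unbiased: E[τ̂²] = τ². -/
/-!
With `Yᵢ = Xᵢ - ν`, the sum of squared deviations from the sample mean is
`∑ Yᵢ² - (∑ Yᵢ)² / N`. The `Yᵢ` are orthogonal in `L²`, so `E[(∑ Yᵢ)²] = ∑ E[Yᵢ²]` and the
expected sum of squared deviations is `(1 - 1/N) ∑ Var[Xᵢ]`. Dividing by `N - 1` leaves the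
average variance `τ² + (1/N) ∑ E[Sᵢ]`.
-/

open MeasureTheory ProbabilityTheory Finset

lemma sum_sq_sub_average {ι : Type*} [Fintype ι] (x : ι → ℝ) (c : ℝ) :
    ∑ i, (x i - (Fintype.card ι : ℝ)⁻¹ * ∑ j, x j) ^ 2
      = ∑ i, (x i - c) ^ 2 - (Fintype.card ι : ℝ)⁻¹ * (∑ i, (x i - c)) ^ 2 := by
  rcases isEmpty_or_nonempty ι with hι | hι
  · simp
  have hn : (Fintype.card ι : ℝ) ≠ 0 := by positivity
  simp only [sum_sub_distrib, sub_sq, sum_add_distrib, ← sum_mul, ← mul_sum, sum_const,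
    card_univ, nsmul_eq_mul]
  field_simp
  ring

lemma integral_sq_sum_of_pairwise_integral_mul_eq_zero {Ω ι : Type*} [MeasurableSpace Ω]
    {μ : Measure Ω} [Fintype ι] {Y : ι → Ω → ℝ} (hY : ∀ i, MemLp (Y i) 2 μ)
    (horth : Pairwise fun i j => ∫ ω, Y i ω * Y j ω ∂μ = 0) :
    ∫ ω, (∑ i, Y i ω) ^ 2 ∂μ = ∑ i, ∫ ω, Y i ω ^ 2 ∂μ := by
  have hmul : ∀ i j, Integrable (fun ω => Y i ω * Y j ω) μ :=
    fun i j => (hY i).integrable_mul (hY j)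
  simp_rw [sq, sum_mul_sum]
  rw [integral_finsetSum _ fun i _ => integrable_finsetSum _ fun j _ => hmul i j]
  refine sum_congr rfl fun i _ => ?_
  rw [integral_finsetSum _ fun j _ => hmul i j, sum_eq_single i]
  · exact fun j _ hji => horth hji.symm
  · simp

lemma integral_sum_sq_sub_average {Ω ι : Type*} [MeasurableSpace Ω] {μ : Measure Ω}
    [IsFiniteMeasure μ] [Fintype ι] {X : ι → Ω → ℝ} {c : ℝ} (hX : ∀ i, MemLp (X i) 2 μ)
    (horth : Pairwise fun i j => ∫ ω, (X i ω - c) * (X j ω - c) ∂μ = 0) :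
    ∫ ω, ∑ i, (X i ω - (Fintype.card ι : ℝ)⁻¹ * ∑ j, X j ω) ^ 2 ∂μ
      = (1 - (Fintype.card ι : ℝ)⁻¹) * ∑ i, ∫ ω, (X i ω - c) ^ 2 ∂μ := by
  have hY : ∀ i, MemLp (fun ω => X i ω - c) 2 μ := fun i => (hX i).sub (memLp_const c)
  have hsq : Integrable (fun ω => ∑ i, (X i ω - c) ^ 2) μ :=
    integrable_finsetSum _ fun i _ => (hY i).integrable_sq
  have hsq_sum : Integrable (fun ω => (∑ i, (X i ω - c)) ^ 2) μ :=
    (memLp_finsetSum _ fun i _ => hY i).integrable_sq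
  simp_rw [sum_sq_sub_average _ c]
  rw [integral_sub hsq (hsq_sum.const_mul _), integral_const_mul,
    integral_sq_sum_of_pairwise_integral_mul_eq_zero hY horth,
    integral_finsetSum _ fun i _ => (hY i).integrable_sq]
  ring

/-- Unbiasedness: if the `μ̃ᵢ` are pairwise uncorrelated, the meta-prior variance
estimator satisfies `E[τ̂²] = τ²`. -/
theorem meta_prior_estimator_unbiased
    {Ω : Type*} [MeasurableSpace Ω] (μ : Measure Ω) [IsProbabilityMeasure μ]
    (N : ℕ) (hN : 2 ≤ N) (X S : Fin N → Ω → ℝ) (ν τsq : ℝ)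
    (hX2 : ∀ i, MemLp (X i) 2 μ) (hS : ∀ i, Integrable (S i) μ)
    (hmean : ∀ i, ∫ ω, X i ω ∂μ = ν)
    (hvar : ∀ i, variance (X i) μ = τsq + ∫ ω, S i ω ∂μ)
    (huncorr : ∀ i j, i ≠ j → ∫ ω, (X i ω - ν) * (X j ω - ν) ∂μ = 0) :
    ∫ ω, (((N : ℝ) - 1)⁻¹ * ∑ i, (X i ω - (N : ℝ)⁻¹ * ∑ j, X j ω) ^ 2
          - (N : ℝ)⁻¹ * ∑ i, S i ω) ∂μ = τsq := by
  have hN1 : (N : ℝ) - 1 ≠ 0 := by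
    have : (2 : ℝ) ≤ N := by exact_mod_cast hN
    linarith
  have hsq_dev : ∀ i, ∫ ω, (X i ω - ν) ^ 2 ∂μ = τsq + ∫ ω, S i ω ∂μ := fun i => by
    rw [← hvar i, variance_eq_integral (hX2 i).aemeasurable, hmean i]
  have hdev : Integrable (fun ω => ∑ i, (X i ω - (N : ℝ)⁻¹ * ∑ j, X j ω) ^ 2) μ :=
    integrable_finsetSum _ fun i _ =>
      ((hX2 i).sub ((memLp_finsetSum _ fun j _ => hX2 j).const_mul _)).integrable_sq
  have hdev_int := integral_sum_sq_sub_average hX2 huncorr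
  rw [Fintype.card_fin] at hdev_int
  rw [integral_sub (hdev.const_mul _) ((integrable_finsetSum _ fun i _ => hS i).const_mul _),
    integral_const_mul, integral_const_mul, hdev_int, integral_finsetSum _ fun i _ => hS i]
  simp only [hsq_dev, sum_add_distrib, sum_const, card_univ, Fintype.card_fin, nsmul_eq_mul]
  field_simp
  ring
end

section
/- Under the assumptions that the families (μ̃_i), (μ̃_i²), and (σ̃_i²) are each sequences of independent random variables with uniformly bounded variances, common structure E[μ̃_i] = ν, Var[μ̃_i] = τ² + E[σ̃_i²], the meta-prior variance estimator τ̂²_N = (N/(N−1))[(1/N)∑_i μ̃_i² − ((1/N)∑_i μ̃_i)²] − (1/N)∑_i σ̃_i² converges almost surely to τ² as N → ∞. -/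
/-!
The three averages obey the strong law of large numbers for independent square-integrable
variables with bounded variances. For centered `Wᵢ` with partial sums `Sₖ`, the second moments
give `∑ₙ E[(S_{n²}/n²)²] ≤ ∑ₙ C/n² < ∞`, so `S_{n²}/n² → 0` almost surely; between consecutive
squares, `|Sₖ - S_{n²}|` is dominated by `∑_{n² ≤ i < (n+1)²} |Wᵢ|`, whose second moment is
`O(n²)`, so the same argument controls the whole sequence.

Since `E[μ̃ᵢ²] = ν² + τ² + E[σ̃ᵢ²]`, the averages of `μ̃ᵢ²` and of `σ̃ᵢ²` differ in the limit by
`τ² + ν²`, while the average of `μ̃ᵢ` tends to `ν`. The factor `N/(N-1) - 1` only multiplies the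
average of `E[σ̃ᵢ²]`, which stays bounded because `0 ≤ Var μ̃ᵢ = τ² + E[σ̃ᵢ²] ≤ εX`.
-/

open MeasureTheory ProbabilityTheory Filter Finset

theorem tendsto_nat_sqrt_atTop : Tendsto Nat.sqrt atTop atTop :=
  tendsto_atTop_atTop.2 fun b => ⟨b * b, fun _ h => Nat.le_sqrt.2 h⟩

theorem abs_inv_mul_sum_range_le_of_sqrt (w : ℕ → ℝ) {k : ℕ} (hk : k ≠ 0) :
    |(k : ℝ)⁻¹ * ∑ i ∈ range k, w i| ≤
      |((k.sqrt : ℝ) ^ 2)⁻¹ * ∑ i ∈ range (k.sqrt ^ 2), w i| +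
        ((k.sqrt : ℝ) ^ 2)⁻¹ * ∑ i ∈ Ico (k.sqrt ^ 2) ((k.sqrt + 1) ^ 2), |w i| := by
  set n := k.sqrt
  have hle : n ^ 2 ≤ k := Nat.sqrt_le' k
  have hlt : k < (n + 1) ^ 2 := Nat.lt_succ_sqrt' k
  have hn : n ≠ 0 := by rintro h; simp [h] at hlt; omega
  have hnpos : (0 : ℝ) < (n : ℝ) ^ 2 := by positivity
  have hsplit : ∑ i ∈ range k, w i = ∑ i ∈ range (n ^ 2), w i + ∑ i ∈ Ico (n ^ 2) k, w i :=
    (sum_range_add_sum_Ico w hle).symm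
  have htail : |∑ i ∈ Ico (n ^ 2) k, w i| ≤ ∑ i ∈ Ico (n ^ 2) ((n + 1) ^ 2), |w i| :=
    (abs_sum_le_sum_abs _ _).trans <| sum_le_sum_of_subset_of_nonneg
      (Ico_subset_Ico le_rfl hlt.le) fun _ _ _ => abs_nonneg _
  have hinv : (k : ℝ)⁻¹ ≤ ((n : ℝ) ^ 2)⁻¹ := inv_anti₀ hnpos (by exact_mod_cast hle)
  rw [abs_mul, abs_mul, abs_inv, abs_inv, Nat.abs_cast, abs_of_pos hnpos, ← mul_add]
  calc (k : ℝ)⁻¹ * |∑ i ∈ range k, w i|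
      ≤ ((n : ℝ) ^ 2)⁻¹ * (|∑ i ∈ range (n ^ 2), w i| + |∑ i ∈ Ico (n ^ 2) k, w i|) := by
        rw [hsplit]; gcongr; exact abs_add_le _ _
    _ ≤ _ := by gcongr

theorem tendsto_average_zero_of_tendsto_sq_subseq (w : ℕ → ℝ)
    (hsq : Tendsto (fun n : ℕ => ((n : ℝ) ^ 2)⁻¹ * ∑ i ∈ range (n ^ 2), w i) atTop (nhds 0))
    (hblock : Tendsto (fun n : ℕ => ((n : ℝ) ^ 2)⁻¹ * ∑ i ∈ Ico (n ^ 2) ((n + 1) ^ 2), |w i|)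
      atTop (nhds 0)) :
    Tendsto (fun k : ℕ => (k : ℝ)⁻¹ * ∑ i ∈ range k, w i) atTop (nhds 0) := by
  have hbound := (hsq.abs.add hblock).comp tendsto_nat_sqrt_atTop
  rw [abs_zero, add_zero] at hbound
  refine squeeze_zero_norm' ?_ hbound
  filter_upwards [eventually_ne_atTop 0] with k hk
  exact abs_inv_mul_sum_range_le_of_sqrt w hk

theorem inv_mul_sum_range_sub_const {n : ℕ} (hn : n ≠ 0) (f : ℕ → ℝ) (c : ℝ) :
    (n : ℝ)⁻¹ * ∑ i ∈ range n, (f i - c) = (n : ℝ)⁻¹ * ∑ i ∈ range n, f i - c := by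
  rw [sum_sub_distrib, sum_const, card_range, nsmul_eq_mul, mul_sub,
    inv_mul_cancel_left₀ (Nat.cast_ne_zero.2 hn)]

theorem abs_inv_mul_sum_range_le {e : ℕ → ℝ} {B : ℝ} (he : ∀ i, |e i| ≤ B) (n : ℕ) :
    |(n : ℝ)⁻¹ * ∑ i ∈ range n, e i| ≤ B := by
  rcases Nat.eq_zero_or_pos n with rfl | hn
  · simpa using (abs_nonneg _).trans (he 0)
  rw [abs_mul, abs_inv, Nat.abs_cast, inv_mul_le_iff₀ (by positivity)]
  calc |∑ i ∈ range n, e i| ≤ ∑ i ∈ range n, |e i| := abs_sum_le_sum_abs _ _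
    _ ≤ ∑ _i ∈ range n, B := sum_le_sum fun i _ => he i
    _ = n * B := by simp

theorem tendsto_debiased_sample_variance_sub {x y s e : ℕ → ℝ} {ν τsq B : ℝ}
    (hx : Tendsto (fun n : ℕ => (n : ℝ)⁻¹ * ∑ i ∈ range n, (x i - ν)) atTop (nhds 0))
    (hy : Tendsto (fun n : ℕ => (n : ℝ)⁻¹ * ∑ i ∈ range n, (y i - (e i + (τsq + ν ^ 2))))
      atTop (nhds 0))
    (hs : Tendsto (fun n : ℕ => (n : ℝ)⁻¹ * ∑ i ∈ range n, (s i - e i)) atTop (nhds 0))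
    (he : ∀ i, |e i| ≤ B) :
    Tendsto (fun n : ℕ => ((n : ℝ) / ((n : ℝ) - 1)) *
        ((n : ℝ)⁻¹ * ∑ i ∈ range n, y i - ((n : ℝ)⁻¹ * ∑ i ∈ range n, x i) ^ 2)
        - (n : ℝ)⁻¹ * ∑ i ∈ range n, s i) atTop (nhds τsq) := by
  set a : ℕ → ℝ := fun n => (n : ℝ)⁻¹ * ∑ i ∈ range n, x i
  set b : ℕ → ℝ := fun n => (n : ℝ)⁻¹ * ∑ i ∈ range n, y i
  set c : ℕ → ℝ := fun n => (n : ℝ)⁻¹ * ∑ i ∈ range n, s i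
  set m : ℕ → ℝ := fun n => (n : ℝ)⁻¹ * ∑ i ∈ range n, e i
  set q : ℕ → ℝ := fun n => (n : ℝ) / ((n : ℝ) - 1)
  have ha : Tendsto a atTop (nhds ν) := by
    have h := hx.add_const ν
    rw [zero_add] at h
    refine h.congr' ?_
    filter_upwards [eventually_ne_atTop 0] with n hn
    rw [inv_mul_sum_range_sub_const hn, sub_add_cancel]
  have hbm : Tendsto (fun n => b n - m n) atTop (nhds (τsq + ν ^ 2)) := by
    have h := hy.add_const (τsq + ν ^ 2)
    rw [zero_add] at h
    refine h.congr' ?_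
    filter_upwards [eventually_ne_atTop 0] with n hn
    simp_rw [← sub_sub (y _)]
    rw [inv_mul_sum_range_sub_const hn, sub_add_cancel, sum_sub_distrib, mul_sub]
  have hcm : Tendsto (fun n => c n - m n) atTop (nhds 0) := by
    simpa only [sum_sub_distrib, mul_sub] using hs
  have hq : Tendsto q atTop (nhds 1) := by
    simpa only [← sub_eq_add_neg] using tendsto_natCast_div_add_atTop (-1 : ℝ)
  have hq1 : Tendsto (fun n => q n - 1) atTop (nhds 0) := by
    simpa only [sub_self] using hq.sub_const 1
  have hm : IsBoundedUnder (· ≤ ·) atTop (norm ∘ m) :=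
    isBoundedUnder_of ⟨B, fun n => abs_inv_mul_sum_range_le he n⟩
  have hlim := ((hq.mul (hbm.sub (ha.pow 2))).sub hcm).add
    (hq1.zero_mul_isBoundedUnder_le hm)
  rw [add_sub_cancel_right, one_mul, sub_zero, add_zero] at hlim
  -- `q (b - a²) - c = q ((b - m) - a²) - (c - m) + (q - 1) m`
  exact hlim.congr fun n => by ring

section

variable {Ω ι : Type*} [MeasurableSpace Ω] {μ : Measure Ω}

theorem ae_tendsto_zero_of_summable_integral_sq {Y : ℕ → Ω → ℝ} (hY : ∀ n, MemLp (Y n) 2 μ)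
    (hsum : Summable fun n => ∫ ω, Y n ω ^ 2 ∂μ) :
    ∀ᵐ ω ∂μ, Tendsto (fun n => Y n ω) atTop (nhds 0) := by
  have hmeas : ∀ n, AEMeasurable (fun ω => ENNReal.ofReal (Y n ω ^ 2)) μ :=
    fun n => (hY n).integrable_sq.aemeasurable.ennreal_ofReal
  have hfinite : ∫⁻ ω, ∑' n, ENNReal.ofReal (Y n ω ^ 2) ∂μ ≠ ⊤ := by
    rw [lintegral_tsum hmeas]
    simp_rw [← ofReal_integral_eq_lintegral_ofReal (hY _).integrable_sq
      (ae_of_all _ fun _ => sq_nonneg _)]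
    rw [← ENNReal.ofReal_tsum_of_nonneg (fun n => integral_nonneg fun _ => sq_nonneg _) hsum]
    exact ENNReal.ofReal_ne_top
  filter_upwards [ae_lt_top' (AEMeasurable.tsum hmeas) hfinite] with ω hω
  have hsq : Summable fun n => Y n ω ^ 2 := by
    simpa only [ENNReal.toReal_ofReal (sq_nonneg _)] using ENNReal.summable_toReal hω.ne
  rw [tendsto_zero_iff_abs_tendsto_zero]
  simpa [Function.comp_def, Real.sqrt_sq_eq_abs] using hsq.tendsto_atTop_zero.sqrt

theorem ae_tendsto_inv_sq_mul_of_integral_sq_le {V : ℕ → Ω → ℝ} {K : ℝ}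
    (hV : ∀ n, MemLp (V n) 2 μ)
    (hK : ∀ᶠ n in atTop, ∫ ω, V n ω ^ 2 ∂μ ≤ K * (n : ℝ) ^ 2) :
    ∀ᵐ ω ∂μ, Tendsto (fun n : ℕ => ((n : ℝ) ^ 2)⁻¹ * V n ω) atTop (nhds 0) := by
  refine ae_tendsto_zero_of_summable_integral_sq (fun n => (hV n).const_mul _) ?_
  refine .of_norm_bounded_eventually_nat
    ((Real.summable_one_div_nat_pow.2 one_lt_two).mul_left K) ?_
  filter_upwards [hK, eventually_ne_atTop 0] with n hn hn0
  simp_rw [mul_pow, integral_const_mul]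
  rw [Real.norm_of_nonneg (by positivity), inv_pow, inv_mul_le_iff₀ (by positivity)]
  calc ∫ ω, V n ω ^ 2 ∂μ ≤ K * (n : ℝ) ^ 2 := hn
    _ = ((n : ℝ) ^ 2) ^ 2 * (K * (1 / (n : ℝ) ^ 2)) := by field_simp

theorem integral_sq_sum_of_indepFun [IsFiniteMeasure μ] {W : ι → Ω → ℝ} (t : Finset ι)
    (hindep : Pairwise fun i j => IndepFun (W i) (W j) μ) (hW : ∀ i, MemLp (W i) 2 μ)
    (hmean : ∀ i, ∫ ω, W i ω ∂μ = 0) :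
    ∫ ω, (∑ i ∈ t, W i ω) ^ 2 ∂μ = ∑ i ∈ t, ∫ ω, W i ω ^ 2 ∂μ := by
  have hsum_mean : ∫ ω, (∑ i ∈ t, W i) ω ∂μ = 0 := by
    simp only [Finset.sum_apply]
    rw [integral_finsetSum t fun i _ => (hW i).integrable one_le_two]
    simp [hmean]
  have hvar := IndepFun.variance_sum (s := t) (fun i _ => hW i)
    fun i _ j _ hij => hindep hij
  rw [variance_of_integral_eq_zero (memLp_finsetSum' t fun i _ => hW i).aemeasurable
    hsum_mean] at hvar
  simpa only [Finset.sum_apply, variance_of_integral_eq_zero (hW _).aemeasurable (hmean _)]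
    using hvar

theorem integral_sq_sum_abs_le {W : ι → Ω → ℝ} {C : ℝ} (t : Finset ι)
    (hW : ∀ i, MemLp (W i) 2 μ) (hsq : ∀ i, ∫ ω, W i ω ^ 2 ∂μ ≤ C) :
    ∫ ω, (∑ i ∈ t, |W i ω|) ^ 2 ∂μ ≤ (#t : ℝ) ^ 2 * C := by
  have hcs : ∀ ω, (∑ i ∈ t, |W i ω|) ^ 2 ≤ #t * ∑ i ∈ t, W i ω ^ 2 := fun ω => by
    simpa only [sq_abs] using sq_sum_le_card_mul_sum_sq (s := t) (f := fun i => |W i ω|)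
  calc ∫ ω, (∑ i ∈ t, |W i ω|) ^ 2 ∂μ ≤ ∫ ω, #t * ∑ i ∈ t, W i ω ^ 2 ∂μ :=
        integral_mono (memLp_finsetSum t fun i _ => (hW i).abs).integrable_sq
          ((integrable_finsetSum t fun i _ => (hW i).integrable_sq).const_mul _) hcs
    _ = #t * ∑ i ∈ t, ∫ ω, W i ω ^ 2 ∂μ := by
        rw [integral_const_mul, integral_finsetSum t fun i _ => (hW i).integrable_sq]
    _ ≤ #t * ∑ _i ∈ t, C := by gcongr with i; exact hsq i
    _ = (#t : ℝ) ^ 2 * C := by rw [sum_const, nsmul_eq_mul]; ring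

theorem ae_tendsto_average_zero_of_integral_eq_zero [IsFiniteMeasure μ] {W : ℕ → Ω → ℝ} {C : ℝ}
    (hindep : Pairwise fun i j => IndepFun (W i) (W j) μ) (hW : ∀ i, MemLp (W i) 2 μ)
    (hmean : ∀ i, ∫ ω, W i ω ∂μ = 0) (hsq : ∀ i, ∫ ω, W i ω ^ 2 ∂μ ≤ C) :
    ∀ᵐ ω ∂μ, Tendsto (fun n : ℕ => (n : ℝ)⁻¹ * ∑ i ∈ range n, W i ω) atTop (nhds 0) := by
  have hC : 0 ≤ C := (integral_nonneg fun _ => sq_nonneg _).trans (hsq 0)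
  have hsquares := ae_tendsto_inv_sq_mul_of_integral_sq_le (K := C)
    (fun n => memLp_finsetSum (range (n ^ 2)) fun i _ => hW i) <| .of_forall fun n => by
      rw [integral_sq_sum_of_indepFun _ hindep hW hmean]
      calc ∑ i ∈ range (n ^ 2), ∫ ω, W i ω ^ 2 ∂μ ≤ ∑ _i ∈ range (n ^ 2), C :=
            sum_le_sum fun i _ => hsq i
        _ = C * (n : ℝ) ^ 2 := by simp [mul_comm]
  have hblocks := ae_tendsto_inv_sq_mul_of_integral_sq_le (K := 9 * C)
    (fun n => memLp_finsetSum (Ico (n ^ 2) ((n + 1) ^ 2)) fun i _ => (hW i).abs) <| by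
      filter_upwards [eventually_ge_atTop 1] with n hn
      have hcard : #(Ico (n ^ 2) ((n + 1) ^ 2)) = 2 * n + 1 := by
        rw [Nat.card_Ico]; ring_nf; omega
      have hn' : (1 : ℝ) ≤ n := by exact_mod_cast hn
      calc _ ≤ (#(Ico (n ^ 2) ((n + 1) ^ 2)) : ℝ) ^ 2 * C := integral_sq_sum_abs_le _ hW hsq
        _ ≤ 9 * C * (n : ℝ) ^ 2 := by
          have hsq_le : (2 * (n : ℝ) + 1) ^ 2 ≤ 9 * (n : ℝ) ^ 2 := by nlinarith
          rw [hcard]; push_cast; nlinarith [mul_le_mul_of_nonneg_right hsq_le hC]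
  filter_upwards [hsquares, hblocks] with ω hω_squares hω_blocks
  exact tendsto_average_zero_of_tendsto_sq_subseq _ hω_squares hω_blocks

theorem ae_tendsto_average_sub_integral [IsProbabilityMeasure μ] {Z : ℕ → Ω → ℝ} {C : ℝ}
    (hindep : Pairwise fun i j => IndepFun (Z i) (Z j) μ) (hZ : ∀ i, MemLp (Z i) 2 μ)
    (hvar : ∀ i, variance (Z i) μ ≤ C) :
    ∀ᵐ ω ∂μ, Tendsto (fun n : ℕ => (n : ℝ)⁻¹ * ∑ i ∈ range n, (Z i ω - ∫ x, Z i x ∂μ))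
      atTop (nhds 0) := by
  have hW : ∀ i, MemLp (fun ω => Z i ω - ∫ x, Z i x ∂μ) 2 μ :=
    fun i => (hZ i).sub (memLp_const _)
  have hmean : ∀ i, ∫ ω, (Z i ω - ∫ x, Z i x ∂μ) ∂μ = 0 := fun i => by
    rw [integral_sub ((hZ i).integrable one_le_two) (integrable_const _)]; simp
  refine ae_tendsto_average_zero_of_integral_eq_zero (C := C)
    (fun i j hij => (hindep hij).comp (measurable_sub_const _) (measurable_sub_const _)) hW hmean
    fun i => ?_
  rw [← variance_of_integral_eq_zero (hW i).aemeasurable (hmean i)]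
  exact (variance_sub_const (hZ i).aestronglyMeasurable _).trans_le (hvar i)

end

theorem meta_prior_estimator_strong_consistency_general
    {Ω : Type*} [MeasurableSpace Ω] (μ : Measure Ω) [IsProbabilityMeasure μ]
    (X S : ℕ → Ω → ℝ) (ν τsq εX εXsq εS : ℝ)
    (hindepX : iIndepFun X μ)
    (hindepXsq : iIndepFun (fun i ω => (X i ω) ^ 2) μ)
    (hindepS : iIndepFun S μ)
    (hX2 : ∀ i, MemLp (X i) 2 μ)
    (hXsq2 : ∀ i, MemLp (fun ω => (X i ω) ^ 2) 2 μ)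
    (hS2 : ∀ i, MemLp (S i) 2 μ)
    (hmean : ∀ i, ∫ ω, X i ω ∂μ = ν)
    (hvar : ∀ i, variance (X i) μ = τsq + ∫ ω, S i ω ∂μ)
    (hvarX : ∀ i, variance (X i) μ ≤ εX)
    (hvarXsq : ∀ i, variance (fun ω => (X i ω) ^ 2) μ ≤ εXsq)
    (hvarS : ∀ i, variance (S i) μ ≤ εS) :
    ∀ᵐ ω ∂μ, Tendsto
      (fun n : ℕ =>
        ((n : ℝ) / ((n : ℝ) - 1)) *
            ((n : ℝ)⁻¹ * ∑ i ∈ Finset.range n, (X i ω) ^ 2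
              - ((n : ℝ)⁻¹ * ∑ i ∈ Finset.range n, X i ω) ^ 2)
          - (n : ℝ)⁻¹ * ∑ i ∈ Finset.range n, S i ω)
      atTop (nhds τsq) := by
  have hsecond : ∀ i, ∫ ω, X i ω ^ 2 ∂μ = ∫ ω, S i ω ∂μ + (τsq + ν ^ 2) := fun i => by
    have h := variance_eq_sub (hX2 i)
    rw [hvar, hmean] at h
    simp only [Pi.pow_apply] at h
    linarith
  have hbound : ∀ i, |∫ ω, S i ω ∂μ| ≤ |τsq| + |εX| := fun i => abs_le.2
    ⟨by linarith [variance_nonneg (X i) μ, hvar i, le_abs_self τsq, abs_nonneg εX],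
     by linarith [hvarX i, hvar i, neg_abs_le τsq, le_abs_self εX]⟩
  filter_upwards [ae_tendsto_average_sub_integral (fun _ _ h => hindepX.indepFun h) hX2 hvarX,
    ae_tendsto_average_sub_integral (fun _ _ h => hindepXsq.indepFun h) hXsq2 hvarXsq,
    ae_tendsto_average_sub_integral (fun _ _ h => hindepS.indepFun h) hS2 hvarS]
    with ω hXω hXsqω hSω
  simp only [hmean, hsecond] at hXω hXsqω
  exact tendsto_debiased_sample_variance_sub hXω hXsqω hSω hbound

/-- Strong consistency of the empirical Bayes meta-prior variance estimator:
`τ̂²_N = (N/(N-1))[(1/N)∑ μ̃ᵢ² - ((1/N)∑ μ̃ᵢ)²] - (1/N)∑ σ̃ᵢ² → τ²` almost surely,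
under independence and uniformly bounded variances of the families
`(μ̃ᵢ)`, `(μ̃ᵢ²)` and `(σ̃ᵢ²)`. -/
theorem meta_prior_estimator_strong_consistency
    {Ω : Type*} [MeasurableSpace Ω] (μ : Measure Ω) [IsProbabilityMeasure μ]
    (X S : ℕ → Ω → ℝ) (ν τsq ε εX εXsq εS : ℝ)
    (hindepX : iIndepFun X μ)
    (hindepXsq : iIndepFun (fun i ω => (X i ω) ^ 2) μ)
    (hindepS : iIndepFun S μ)
    (hX2 : ∀ i, MemLp (X i) 2 μ)
    (hXsq2 : ∀ i, MemLp (fun ω => (X i ω) ^ 2) 2 μ)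
    (hS2 : ∀ i, MemLp (S i) 2 μ)
    (hmean : ∀ i, ∫ ω, X i ω ∂μ = ν)
    (hvar : ∀ i, variance (X i) μ = τsq + ∫ ω, S i ω ∂μ)
    (hSmean_nonneg : ∀ i, 0 ≤ ∫ ω, S i ω ∂μ)
    (hSmean_bdd : ∀ i, ∫ ω, S i ω ∂μ ≤ ε)
    (hvarX : ∀ i, variance (X i) μ ≤ εX)
    (hvarXsq : ∀ i, variance (fun ω => (X i ω) ^ 2) μ ≤ εXsq)
    (hvarS : ∀ i, variance (S i) μ ≤ εS) :
    ∀ᵐ ω ∂μ, Tendsto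
      (fun n : ℕ =>
        ((n : ℝ) / ((n : ℝ) - 1)) *
            ((n : ℝ)⁻¹ * ∑ i ∈ Finset.range n, (X i ω) ^ 2
              - ((n : ℝ)⁻¹ * ∑ i ∈ Finset.range n, X i ω) ^ 2)
          - (n : ℝ)⁻¹ * ∑ i ∈ Finset.range n, S i ω)
      atTop (nhds τsq) :=
  meta_prior_estimator_strong_consistency_general μ X S ν τsq εX εXsq εS hindepX hindepXsq hindepS
    hX2 hXsq2 hS2 hmean hvar hvarX hvarXsq hvarS
end
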